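/- If W ⊆ Σ^ω is positional over Eve-games, then the set of residuals of W is well-founded for strict inclusion: there is no infinite sequence u₁, u₂, u₃, … ∈ Σ* with u₁⁻¹W ⊋ u₂⁻¹W ⊋ u₃⁻¹W ⊋ ⋯. -/

import Mathlib

universe u

/-- Concatenation of a finite word with an infinite word. -/
def wcat {A : Type*} (u : List A) (x : ℕ → A) : ℕ → A := fun n =>
  if h : n < u.length then u.get ⟨n, h⟩ else x (n - u.length)

/-- The resid of a language of infinite words with respect to a finite word. -/
def resid {A : Type*} (L : Set (ℕ → A)) (u : List A) : Set (ℕ → A) := {x | wcat u x ∈ L}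

/-- The infinite word `w^ω` obtained by repeating a (nonempty) finite word `w`. -/
def omegaPow {A : Type*} [Inhabited A] (w : List A) : ℕ → A :=
  fun n => w.getD (n % w.length) default

/-- The path obtained from `v` by following the positional strategy `σ`. -/
def stratPath {V A : Type*} (σ : V → A × V) (v : V) : ℕ → V
  | 0 => v
  | n + 1 => (σ (stratPath σ v n)).2

/-- `W` is positional over Eve-games: in every (possibly infinite) Eve-game, i.e.
every `A`-labelled directed graph in which each vertex has an outgoing edge, there
is a single positional strategy winning from every vertex from which some winning
play exists. -/
def PositionalEve {A : Type u} (W : Set (ℕ → A)) : Prop :=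
  ∀ (V : Type u) (E : V → A → V → Prop), (∀ v, ∃ a v', E v a v') →
    ∃ σ : V → A × V, (∀ v, E v (σ v).1 (σ v).2) ∧
      ∀ v, (∃ (ρ : ℕ → V) (lab : ℕ → A), ρ 0 = v ∧
              (∀ n, E (ρ n) (lab n) (ρ (n + 1))) ∧ lab ∈ W) →
        (fun n => (σ (stratPath σ v n)).1) ∈ W

/-!
Pick `x i ∈ (u i)⁻¹W \ (u (i+1))⁻¹W`. In the game where Eve first reads an arbitrary finite word
`w` and then chooses one continuation `x j`, she can win from `w = u i` by choosing `x i`. A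
positional strategy makes one choice `x j` at the choice vertex, whatever `w` was read, so it
would have to win from `u (j+1)` with `u (j+1) x j ∈ W`, contradicting the choice of `x j`.
-/

theorem wcat_eq_appendStream' {A : Type*} (u : List A) (x : Stream' A) : wcat u x = u ++ₛ x := by
  funext n
  by_cases hn : n < u.length
  · change _ = (u ++ₛ x).get n
    rw [Stream'.get_append_left n u x hn]
    simp [wcat, hn]
  · obtain ⟨k, rfl⟩ := Nat.exists_eq_add_of_le (not_lt.mp hn)
    change _ = (u ++ₛ x).get _
    rw [Stream'.get_append_right]
    simp [wcat, Stream'.get]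

theorem mem_resid_iff {A : Type*} {L : Set (Stream' A)} {u : List A} {x : Stream' A} :
    x ∈ resid L u ↔ u ++ₛ x ∈ L :=
  Iff.of_eq (congrArg (· ∈ L) (wcat_eq_appendStream' u x))

section Plays

variable {V A : Type*} {E : V → A → V → Prop}

def IsPlay (E : V → A → V → Prop) (ρ : Stream' V) (lab : Stream' A) : Prop :=
  ∀ n, E (ρ.get n) (lab.get n) (ρ.get (n + 1))

theorem IsPlay.tail {ρ : Stream' V} {lab : Stream' A} (h : IsPlay E ρ lab) :
    IsPlay E ρ.tail lab.tail :=
  fun n => h (n + 1)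

theorem IsPlay.cons {ρ : Stream' V} {lab : Stream' A} {v : V} {a : A} (hv : E v a (ρ.get 0))
    (h : IsPlay E ρ lab) : IsPlay E (Stream'.cons v ρ) (Stream'.cons a lab)
  | 0 => hv
  | n + 1 => h n

def stratLabel (σ : V → A × V) (v : V) : Stream' A := fun n => (σ (stratPath σ v n)).1

theorem isPlay_stratPath {σ : V → A × V} (hσ : ∀ v, E v (σ v).1 (σ v).2) (v : V) :
    IsPlay E (stratPath σ v) (stratLabel σ v) :=
  fun _ => hσ _

theorem stratPath_add (σ : V → A × V) (v : V) (m n : ℕ) :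
    stratPath σ v (n + m) = stratPath σ (stratPath σ v m) n := by
  induction n with
  | zero => simp [stratPath]
  | succ n ih => rw [Nat.add_right_comm, stratPath, ih, stratPath]

theorem drop_stratLabel (σ : V → A × V) (v : V) (m : ℕ) :
    (stratLabel σ v).drop m = stratLabel σ (stratPath σ v m) :=
  funext fun n => by simp only [Stream'.drop, Stream'.get, stratLabel, stratPath_add]

end Plays

section ContinuationGame

variable {A : Type*} {K : Set (Stream' A)}

/-- Eve reads the finite word `w` from `inl w`; at `inl []` she picks a continuation `y ∈ K`,
which is then read letter by letter through the vertices `inr`. -/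
def ContinuationEdge (K : Set (Stream' A)) : List A ⊕ Stream' A → A → List A ⊕ Stream' A → Prop
  | .inl (b :: w), a, v => a = b ∧ v = .inl w
  | .inl [], a, v => ∃ y ∈ K, a = y.head ∧ v = .inr y.tail
  | .inr y, a, v => a = y.head ∧ v = .inr y.tail

theorem continuationEdge_total (hK : K.Nonempty) (v : List A ⊕ Stream' A) :
    ∃ a v', ContinuationEdge K v a v' := by
  obtain ⟨y, hy⟩ := hK
  rcases v with (_ | ⟨b, w⟩) | z
  · exact ⟨_, _, y, hy, rfl, rfl⟩
  · exact ⟨b, .inl w, rfl, rfl⟩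
  · exact ⟨_, _, rfl, rfl⟩

theorem isPlay_continuationEdge_inr (y : Stream' A) :
    IsPlay (ContinuationEdge K) (fun n => .inr (y.drop n)) y :=
  fun n => ⟨by simp [Stream'.get], by simp [Stream'.get]⟩

theorem exists_isPlay_append {y : Stream' A} (hy : y ∈ K) (w : List A) :
    ∃ ρ : Stream' _, ρ.get 0 = .inl w ∧ IsPlay (ContinuationEdge K) ρ (w ++ₛ y) := by
  induction w with
  | nil =>
    refine ⟨Stream'.cons (.inl []) fun n => .inr (y.tail.drop n), rfl, ?_⟩
    rw [Stream'.nil_append_stream, ← Stream'.eta y]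
    exact (isPlay_continuationEdge_inr _).cons ⟨y, hy, rfl, rfl⟩
  | cons b w ih =>
    obtain ⟨ρ, hρ0, hρ⟩ := ih
    exact ⟨Stream'.cons (.inl (b :: w)) ρ, rfl, hρ.cons ⟨rfl, hρ0⟩⟩

namespace IsPlay

variable {ρ : Stream' (List A ⊕ Stream' A)} {lab : Stream' A}

theorem eq_of_start_inr {y : Stream' A} (h : IsPlay (ContinuationEdge K) ρ lab)
    (h0 : ρ.get 0 = .inr y) : lab = y := by
  funext n
  induction n generalizing ρ lab y with
  | zero => exact (h0 ▸ h 0 :).1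
  | succ n ih => exact ih h.tail (h0 ▸ h 0 :).2

theorem mem_of_start_inl_nil (h : IsPlay (ContinuationEdge K) ρ lab)
    (h0 : ρ.get 0 = .inl []) : lab ∈ K := by
  obtain ⟨y, hy, hhead, h1⟩ : ∃ y ∈ K, lab.head = y.head ∧ ρ.tail.get 0 = .inr y.tail := by
    simpa [h0, ContinuationEdge] using h 0
  have htail : lab.tail = y.tail := h.tail.eq_of_start_inr h1
  rwa [← Stream'.eta lab, hhead, htail, Stream'.eta]

theorem take_eq_of_start_inl {w : List A} (h : IsPlay (ContinuationEdge K) ρ lab)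
    (h0 : ρ.get 0 = .inl w) : ρ.get w.length = .inl [] ∧ lab.take w.length = w := by
  induction w generalizing ρ lab with
  | nil => exact ⟨h0, rfl⟩
  | cons b w ih =>
    obtain ⟨hb, h1⟩ : lab.head = b ∧ ρ.tail.get 0 = .inl w := by
      simpa [h0, ContinuationEdge] using h 0
    obtain ⟨hw, htake⟩ := ih h.tail h1
    exact ⟨hw, by rw [List.length_cons, Stream'.take_succ, htake, hb]⟩

end IsPlay

theorem stratLabel_inl {σ : List A ⊕ Stream' A → A × (List A ⊕ Stream' A)}
    (hσ : ∀ v, ContinuationEdge K v (σ v).1 (σ v).2) (w : List A) :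
    stratLabel σ (.inl w) = w ++ₛ stratLabel σ (.inl []) := by
  obtain ⟨hpath, htake⟩ := (isPlay_stratPath hσ (.inl w)).take_eq_of_start_inl rfl
  rw [← Stream'.append_take_drop w.length (stratLabel σ _), htake, drop_stratLabel]
  exact congrArg (fun v => w ++ₛ stratLabel σ v) hpath

end ContinuationGame

theorem PositionalEve.exists_uniform_continuation {A : Type u} {W K : Set (Stream' A)}
    (hW : PositionalEve W) (hK : K.Nonempty) :
    ∃ y ∈ K, ∀ w : List A, (∃ z ∈ K, w ++ₛ z ∈ W) → w ++ₛ y ∈ W := by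
  obtain ⟨σ, hσ, hwin⟩ := hW _ (ContinuationEdge K) (continuationEdge_total hK)
  refine ⟨_, (isPlay_stratPath hσ (.inl [])).mem_of_start_inl_nil rfl, fun w ⟨z, hz, hwz⟩ => ?_⟩
  obtain ⟨ρ, hρ0, hρ⟩ := exists_isPlay_append hz w
  rw [← stratLabel_inl hσ w]
  exact hwin _ ⟨ρ, _, hρ0, hρ, hwz⟩

/-- If `W` is positional over Eve-games then there is no infinite strictly
decreasing chain of residuals. -/
theorem positional_residuals_wellFounded {A : Type u}
    (W : Set (ℕ → A)) (hpos : PositionalEve W) :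
    ¬ ∃ u : ℕ → List A, ∀ i, resid W (u (i + 1)) ⊂ resid W (u i) := by
  rintro ⟨u, hu⟩
  choose x hx hx' using fun i => Set.exists_of_ssubset (hu i)
  obtain ⟨_, ⟨j, rfl⟩, hy⟩ := hpos.exists_uniform_continuation (Set.range_nonempty x)
  exact hx' j (mem_resid_iff.2 (hy (u (j + 1)) ⟨x (j + 1), ⟨_, rfl⟩, mem_resid_iff.1 (hx _)⟩))
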